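/- Let q = 2^t with t ≥ 1, n = q^2 + 1, and a = q^2/2. For 0 ≤ i, j ≤ q/2 − 1, the q^2-ary cyclotomic coset C_{a−i} modulo n is disjoint from −q·C_{a−j} mod n = {−q·x mod n : x ∈ C_{a−j}}. -/

import Mathlib

/-!
Since `q² ≡ -1 (mod n)`, the coset `C_s` consists of the residues of `±s`, and `-q·C_{a-j}` of
those of `±q(a - j)`. Writing `q = 2h`, so that `n = 4h² + 1` and `a = 2h²`, one has
`q(a - j) + h(2j + 1) = h·n`, so `±q(a - j) ≡ ∓h(2j + 1)`. For `i, j < h` the numbers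
`a - i` and `h(2j + 1)` are distinct residues with sum less than `n`, so `a - i ≢ ±h(2j + 1)`.
-/

/-- The q²-ary cyclotomic coset of `s` modulo `n`. -/
def cyclotomicCoset (q2 n s : ℕ) : Set ℕ := {x | ∃ j : ℕ, x = s * q2 ^ j % n}

namespace ZMod

variable {n : ℕ}

theorem natCast_ne_natCast_of_lt {u v : ℕ} (hu : u < n) (hv : v < n) (huv : u ≠ v) :
    (u : ZMod n) ≠ v := by
  rwa [Ne, natCast_eq_natCast_iff', Nat.mod_eq_of_lt hu, Nat.mod_eq_of_lt hv]

theorem natCast_ne_neg_natCast_of_add_lt {u v : ℕ} (hpos : 0 < u + v) (hlt : u + v < n) :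
    (u : ZMod n) ≠ -v := by
  intro h
  have hdvd : n ∣ u + v := by
    rw [← natCast_eq_zero_iff, Nat.cast_add, h, neg_add_cancel]
  exact hpos.ne' (Nat.eq_zero_of_dvd_of_lt hdvd hlt)

theorem natCast_sub_mod_mod (hn : 0 < n) (m : ℕ) :
    (((n - m % n) % n : ℕ) : ZMod n) = -m := by
  rw [natCast_mod, Nat.cast_sub (Nat.mod_lt m hn).le, natCast_self, natCast_mod, zero_sub]

end ZMod

theorem eq_or_eq_neg_of_eq_or_eq_neg {R : Type*} [Ring R] {x u v : R}
    (hu : x = u ∨ x = -u) (hv : x = v ∨ x = -v) : u = v ∨ u = -v := by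
  rcases hu with rfl | rfl <;> rcases hv with h | h
  · exact Or.inl h
  · exact Or.inr h
  · exact Or.inr (neg_eq_iff_eq_neg.mp h)
  · exact Or.inl (neg_inj.mp h)

theorem natCast_eq_or_eq_neg_of_mem_cyclotomicCoset {q2 n s x : ℕ} (hq2 : (q2 : ZMod n) = -1)
    (hx : x ∈ cyclotomicCoset q2 n s) : (x : ZMod n) = s ∨ (x : ZMod n) = -s := by
  obtain ⟨k, rfl⟩ := hx
  rw [ZMod.natCast_mod, Nat.cast_mul, Nat.cast_pow, hq2]
  rcases neg_one_pow_eq_or (ZMod n) k with hk | hk <;> simp [hk]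

theorem natCast_eq_or_eq_neg_of_mem_neg_mul_cyclotomicCoset {q q2 n s y : ℕ} (hn : 0 < n)
    (hq2 : (q2 : ZMod n) = -1)
    (hy : y ∈ {y : ℕ | ∃ x ∈ cyclotomicCoset q2 n s, y = (n - q * x % n) % n}) :
    (y : ZMod n) = q * s ∨ (y : ZMod n) = -(q * s) := by
  obtain ⟨x, hx, rfl⟩ := hy
  rw [ZMod.natCast_sub_mod_mod hn, Nat.cast_mul]
  rcases natCast_eq_or_eq_neg_of_mem_cyclotomicCoset hq2 hx with e | e <;> simp [e]

theorem natCast_two_mul_mul_two_mul_sq_sub {h j : ℕ} (hj : j ≤ 2 * h ^ 2) :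
    ((2 * h : ℕ) : ZMod (4 * h ^ 2 + 1)) * (2 * h ^ 2 - j : ℕ) = -(h * (2 * j + 1) : ℕ) := by
  have hsum : 2 * h * (2 * h ^ 2 - j) + h * (2 * j + 1) = h * (4 * h ^ 2 + 1) := by
    zify [hj]
    ring
  rw [eq_neg_iff_add_eq_zero, ← Nat.cast_mul, ← Nat.cast_add, hsum, Nat.cast_mul,
    ZMod.natCast_self, mul_zero]

theorem two_mul_sq_sub_ne_mul_odd {h i j : ℕ} (hi : i < h) (hj : j < h) :
    ((2 * h ^ 2 - i : ℕ) : ZMod (4 * h ^ 2 + 1)) ≠ (h * (2 * j + 1) : ℕ) ∧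
      ((2 * h ^ 2 - i : ℕ) : ZMod (4 * h ^ 2 + 1)) ≠ -(h * (2 * j + 1) : ℕ) := by
  have hv : h * (2 * j + 1) + h ≤ 2 * h ^ 2 := by nlinarith
  constructor
  · exact ZMod.natCast_ne_natCast_of_lt (by omega) (by omega) (by omega)
  · exact ZMod.natCast_ne_neg_natCast_of_add_lt (by omega) (by omega)

theorem coset_disjoint_neg_q_coset (t q n a : ℕ) (ht : 1 ≤ t) (hq : q = 2 ^ t)
    (hn : n = q ^ 2 + 1) (ha : a = q ^ 2 / 2)
    (i j : ℕ) (hi : i ≤ q / 2 - 1) (hj : j ≤ q / 2 - 1) :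
    Disjoint (cyclotomicCoset (q ^ 2) n (a - i))
      {y : ℕ | ∃ x ∈ cyclotomicCoset (q ^ 2) n (a - j), y = (n - q * x % n) % n} := by
  have hq2 : ((q ^ 2 : ℕ) : ZMod n) = -1 := by
    subst hn
    exact eq_neg_of_add_eq_zero_left (ZMod.natCast_self' _)
  obtain ⟨h, hh, rfl⟩ : ∃ h, 0 < h ∧ q = 2 * h :=
    ⟨2 ^ (t - 1), by positivity, by rw [hq, ← pow_succ', Nat.sub_add_cancel ht]⟩
  have hi' : i < h := by omega
  have hj' : j < h := by omega
  have ha' : a = 2 * h ^ 2 := by rw [ha, mul_pow]; omega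
  have hn' : n = 4 * h ^ 2 + 1 := by rw [hn, mul_pow]; norm_num
  subst ha' hn'
  have hqa := natCast_two_mul_mul_two_mul_sq_sub (h := h) (j := j) (by nlinarith)
  have hne := two_mul_sq_sub_ne_mul_odd hi' hj'
  rw [Set.disjoint_left]
  intro x hx hx'
  rcases eq_or_eq_neg_of_eq_or_eq_neg (natCast_eq_or_eq_neg_of_mem_cyclotomicCoset hq2 hx)
    (natCast_eq_or_eq_neg_of_mem_neg_mul_cyclotomicCoset (by positivity) hq2 hx') with e | e
  · exact hne.2 (e.trans hqa)
  · exact hne.1 (by rw [e, hqa, neg_neg])
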